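/- Let W and Q be probability measures with W ≪ Q, α > 1 with D_α(W‖Q) < ∞, and W^{(α)} the order-α tilted measure. Fix τ ∈ ℝ and for each integer k let B_k = { y : τ + k ≤ Λ(y) − E_{W^{(α)}}[Λ] < τ + k + 1 } where Λ = ln(dW/dQ). Then for any measurable event E and any integer k: (i) W^{(α)}(E ∩ B_k) ≤ Q(E ∩ B_k)·e^{D(W^{(α)}‖Q) + α τ + α(k+1)}, and (ii) W^{(α)}(E ∩ B_k) ≥ W(E ∩ B_k)·e^{D(W^{(α)}‖W) + (α−1)τ + (α−1)k}. -/

import Mathlib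

open Real BigOperators Finset Filter Topology
open scoped Classical

/-- A probability mass function on a finite type, represented as a real-valued function. -/
def IsPmf {Y : Type*} [Fintype Y] (p : Y → ℝ) : Prop :=
  (∀ y, 0 ≤ p y) ∧ ∑ y, p y = 1

/-- Absolute continuity for pmfs on a finite type. -/
def AbsCont {Y : Type*} [Fintype Y] (p q : Y → ℝ) : Prop :=
  ∀ y, q y = 0 → p y = 0

/-- Kullback–Leibler divergence (relative entropy). -/
noncomputable def klD {Y : Type*} [Fintype Y] (p q : Y → ℝ) : ℝ :=
  ∑ y, p y * Real.log (p y / q y)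

/-- Rényi divergence of order α (Kullback–Leibler divergence at α = 1). -/
noncomputable def renyiD {Y : Type*} [Fintype Y] (α : ℝ) (p q : Y → ℝ) : ℝ :=
  if α = 1 then klD p q
  else (α - 1)⁻¹ * Real.log (∑ y, p y ^ α * q y ^ (1 - α))

/-- The order-α tilted probability measure of p with respect to q. -/
noncomputable def tilted {Y : Type*} [Fintype Y] (α : ℝ) (p q : Y → ℝ) : Y → ℝ :=
  fun y => Real.exp ((1 - α) * renyiD α p q) * p y ^ α * q y ^ (1 - α)

/-- The centered log-likelihood ratio, centered at its mean under the tilted measure. -/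
noncomputable def cLLR {Y : Type*} [Fintype Y] (α : ℝ) (p q : Y → ℝ) (y : Y) : ℝ :=
  Real.log (p y / q y) - ∑ z, tilted α p q z * Real.log (p z / q z)

/-!
Write `Λ = log (p / q)` and `D = renyiD α p q`. Where `p y > 0` the tilted mass is
`exp ((1 - α) D) * p y ^ α * q y ^ (1 - α)`, so `log (tilted / q) = (1 - α) D + α Λ` and
`log (tilted / p) = (1 - α) D + (α - 1) Λ`. Averaging these under the tilted measure identifies
the constants: `log (tilted / q) = D(tilted‖q) + α cLLR` and
`log (tilted / p) = D(tilted‖p) + (α - 1) cLLR`. On the slice `B_k` we have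
`τ + k ≤ cLLR < τ + k + 1`, which bounds `tilted / q` from above and `tilted / p` from below
pointwise; summing over `E ∩ B_k` gives both bounds.
-/

lemma klD_eq_add_sum_of_log_div {Y : Type*} [Fintype Y] {w r : Y → ℝ} (hw : ∑ y, w y = 1)
    (a : ℝ) (f : Y → ℝ) (h : ∀ y, w y ≠ 0 → log (w y / r y) = a + f y) :
    klD w r = a + ∑ y, w y * f y := by
  calc klD w r = ∑ y, (w y * a + w y * f y) := by
        refine sum_congr rfl fun y _ => ?_
        by_cases hy : w y = 0
        · simp [hy]
        · rw [h y hy]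
          ring
    _ = a + ∑ y, w y * f y := by rw [sum_add_distrib, ← sum_mul, hw, one_mul]

section Tilted

variable {Y : Type*} [Fintype Y] {α : ℝ} {p q : Y → ℝ} {y : Y}

lemma IsPmf.exists_pos (hp : IsPmf p) : ∃ y, 0 < p y := by
  by_contra! h
  have h0 : ∑ y, p y = 0 := sum_eq_zero fun y _ => le_antisymm (h y) (hp.1 y)
  linarith [hp.2]

lemma AbsCont.pos_of_pos (hac : AbsCont p q) (hq : IsPmf q) (hpy : 0 < p y) : 0 < q y :=
  (hq.1 y).lt_of_ne fun h => hpy.ne' (hac y h.symm)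

lemma sum_rpow_mul_rpow_pos (hp : IsPmf p) (hq : IsPmf q) (hac : AbsCont p q) :
    0 < ∑ y, p y ^ α * q y ^ (1 - α) := by
  obtain ⟨y, hpy⟩ := hp.exists_pos
  refine sum_pos' (fun z _ => mul_nonneg (rpow_nonneg (hp.1 z) _) (rpow_nonneg (hq.1 z) _))
    ⟨y, mem_univ y, mul_pos (rpow_pos_of_pos hpy _) (rpow_pos_of_pos (hac.pos_of_pos hq hpy) _)⟩

lemma tilted_eq_div_sum (hα : α ≠ 1) (hS : 0 < ∑ z, p z ^ α * q z ^ (1 - α)) (y : Y) :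
    tilted α p q y = p y ^ α * q y ^ (1 - α) / ∑ z, p z ^ α * q z ^ (1 - α) := by
  have hexp : (1 - α) * ((α - 1)⁻¹ * log (∑ z, p z ^ α * q z ^ (1 - α))) =
      -log (∑ z, p z ^ α * q z ^ (1 - α)) := by
    field_simp [sub_ne_zero.mpr hα]
    ring
  rw [tilted, renyiD, if_neg hα, hexp, exp_neg, exp_log hS, div_eq_inv_mul, mul_assoc]

lemma sum_tilted (hα : α ≠ 1) (hp : IsPmf p) (hq : IsPmf q) (hac : AbsCont p q) :
    ∑ y, tilted α p q y = 1 := by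
  have hS := sum_rpow_mul_rpow_pos (α := α) hp hq hac
  simp_rw [tilted_eq_div_sum hα hS]
  rw [← sum_div, div_self hS.ne']

lemma tilted_nonneg (hp : IsPmf p) (hq : IsPmf q) (y : Y) : 0 ≤ tilted α p q y :=
  mul_nonneg (mul_nonneg (exp_pos _).le (rpow_nonneg (hp.1 y) _)) (rpow_nonneg (hq.1 y) _)

lemma tilted_pos (hpy : 0 < p y) (hqy : 0 < q y) : 0 < tilted α p q y :=
  mul_pos (mul_pos (exp_pos _) (rpow_pos_of_pos hpy _)) (rpow_pos_of_pos hqy _)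

lemma tilted_eq_zero_of_eq_zero (hα : 0 < α) (hpy : p y = 0) : tilted α p q y = 0 := by
  rw [tilted, hpy, zero_rpow hα.ne', mul_zero, zero_mul]

lemma log_tilted (hpy : 0 < p y) (hqy : 0 < q y) :
    log (tilted α p q y) = (1 - α) * renyiD α p q + α * log (p y) + (1 - α) * log (q y) := by
  rw [tilted, log_mul (mul_pos (exp_pos _) (rpow_pos_of_pos hpy _)).ne'
      (rpow_pos_of_pos hqy _).ne', log_mul (exp_pos _).ne' (rpow_pos_of_pos hpy _).ne',
    log_exp, log_rpow hpy, log_rpow hqy]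

lemma log_tilted_div_right (hpy : 0 < p y) (hqy : 0 < q y) :
    log (tilted α p q y / q y) = (1 - α) * renyiD α p q + α * log (p y / q y) := by
  rw [log_div (tilted_pos hpy hqy).ne' hqy.ne', log_div hpy.ne' hqy.ne', log_tilted hpy hqy]
  ring

lemma log_tilted_div_left (hpy : 0 < p y) (hqy : 0 < q y) :
    log (tilted α p q y / p y) = (1 - α) * renyiD α p q + (α - 1) * log (p y / q y) := by
  rw [log_div (tilted_pos hpy hqy).ne' hpy.ne', log_div hpy.ne' hqy.ne', log_tilted hpy hqy]
  ring

lemma pos_of_tilted_ne_zero (hα : 0 < α) (hp : IsPmf p) (hy : tilted α p q y ≠ 0) : 0 < p y :=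
  (hp.1 y).lt_of_ne fun h => hy (tilted_eq_zero_of_eq_zero hα h.symm)

lemma klD_tilted_right (hα₀ : 0 < α) (hα₁ : α ≠ 1) (hp : IsPmf p) (hq : IsPmf q)
    (hac : AbsCont p q) :
    klD (tilted α p q) q =
      (1 - α) * renyiD α p q + ∑ z, tilted α p q z * (α * log (p z / q z)) :=
  klD_eq_add_sum_of_log_div (sum_tilted hα₁ hp hq hac) _ _ fun _ hz =>
    have hpz := pos_of_tilted_ne_zero hα₀ hp hz
    log_tilted_div_right hpz (hac.pos_of_pos hq hpz)

lemma klD_tilted_left (hα₀ : 0 < α) (hα₁ : α ≠ 1) (hp : IsPmf p) (hq : IsPmf q)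
    (hac : AbsCont p q) :
    klD (tilted α p q) p =
      (1 - α) * renyiD α p q + ∑ z, tilted α p q z * ((α - 1) * log (p z / q z)) :=
  klD_eq_add_sum_of_log_div (sum_tilted hα₁ hp hq hac) _ _ fun _ hz =>
    have hpz := pos_of_tilted_ne_zero hα₀ hp hz
    log_tilted_div_left hpz (hac.pos_of_pos hq hpz)

lemma log_tilted_div_right_eq (hα₀ : 0 < α) (hα₁ : α ≠ 1) (hp : IsPmf p) (hq : IsPmf q)
    (hac : AbsCont p q) (hpy : 0 < p y) (hqy : 0 < q y) :
    log (tilted α p q y / q y) = klD (tilted α p q) q + α * cLLR α p q y := by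
  rw [klD_tilted_right hα₀ hα₁ hp hq hac, log_tilted_div_right hpy hqy, cLLR]
  simp_rw [mul_left_comm _ α, ← mul_sum]
  ring

lemma log_tilted_div_left_eq (hα₀ : 0 < α) (hα₁ : α ≠ 1) (hp : IsPmf p) (hq : IsPmf q)
    (hac : AbsCont p q) (hpy : 0 < p y) (hqy : 0 < q y) :
    log (tilted α p q y / p y) = klD (tilted α p q) p + (α - 1) * cLLR α p q y := by
  rw [klD_tilted_left hα₀ hα₁ hp hq hac, log_tilted_div_left hpy hqy, cLLR]
  simp_rw [mul_left_comm _ (α - 1), ← mul_sum]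
  ring

lemma tilted_le_of_cLLR_le (hα₀ : 0 < α) (hα₁ : α ≠ 1) (hp : IsPmf p) (hq : IsPmf q)
    (hac : AbsCont p q) {t : ℝ} (ht : cLLR α p q y ≤ t) :
    tilted α p q y ≤ q y * exp (klD (tilted α p q) q + α * t) := by
  rcases (hp.1 y).eq_or_lt with hpy | hpy
  · rw [tilted_eq_zero_of_eq_zero hα₀ hpy.symm]
    exact mul_nonneg (hq.1 y) (exp_pos _).le
  have hqy := hac.pos_of_pos hq hpy
  rw [← div_le_iff₀' hqy, ← log_le_iff_le_exp (div_pos (tilted_pos hpy hqy) hqy),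
    log_tilted_div_right_eq hα₀ hα₁ hp hq hac hpy hqy]
  linarith [mul_le_mul_of_nonneg_left ht hα₀.le]

lemma mul_exp_le_tilted_of_le_cLLR (hα : 1 < α) (hp : IsPmf p) (hq : IsPmf q)
    (hac : AbsCont p q) {t : ℝ} (ht : t ≤ cLLR α p q y) :
    p y * exp (klD (tilted α p q) p + (α - 1) * t) ≤ tilted α p q y := by
  rcases (hp.1 y).eq_or_lt with hpy | hpy
  · rw [← hpy, zero_mul]
    exact tilted_nonneg hp hq y
  have hqy := hac.pos_of_pos hq hpy
  rw [← le_div_iff₀' hpy, ← le_log_iff_exp_le (div_pos (tilted_pos hpy hqy) hpy),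
    log_tilted_div_left_eq (by linarith) hα.ne' hp hq hac hpy hqy]
  linarith [mul_le_mul_of_nonneg_left ht (sub_nonneg.mpr hα.le)]

end Tilted

/-- change-of-measure bounds on the slices B_k. -/
theorem tilted_slice_bounds {Y : Type*} [Fintype Y] (α : ℝ) (hα : 1 < α)
    (p q : Y → ℝ) (hp : IsPmf p) (hq : IsPmf q) (hac : AbsCont p q)
    (τ : ℝ) (k : ℤ) (E : Finset Y) :
    (∑ y ∈ E, (if τ + k ≤ cLLR α p q y ∧ cLLR α p q y < τ + k + 1
        then tilted α p q y else 0))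
      ≤ (∑ y ∈ E, (if τ + k ≤ cLLR α p q y ∧ cLLR α p q y < τ + k + 1
          then q y else 0))
        * Real.exp (klD (tilted α p q) q + α * τ + α * (k + 1))
    ∧ (∑ y ∈ E, (if τ + k ≤ cLLR α p q y ∧ cLLR α p q y < τ + k + 1
        then tilted α p q y else 0))
      ≥ (∑ y ∈ E, (if τ + k ≤ cLLR α p q y ∧ cLLR α p q y < τ + k + 1
          then p y else 0))
        * Real.exp (klD (tilted α p q) p + (α - 1) * τ + (α - 1) * k) := by
  simp only [← sum_filter, sum_mul, ge_iff_le]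
  constructor
  · refine sum_le_sum fun y hy => ?_
    have hslice := (mem_filter.mp hy).2
    refine (tilted_le_of_cLLR_le (by linarith) hα.ne' hp hq hac hslice.2.le).trans_eq ?_
    ring_nf
  · refine sum_le_sum fun y hy => ?_
    have hslice := (mem_filter.mp hy).2
    refine le_of_eq_of_le ?_ (mul_exp_le_tilted_of_le_cLLR hα hp hq hac hslice.1)
    ring_nf
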